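/- Let (E, F) be a resistance form on a set X whose resistance metric R is complete and such that (X,R) is doubling and uniformly perfect. Let A₁, A₂ be nonempty subsets of X and let {V_n}_{n≥0} be a spread sequence of (X,R) such that A_i ⊆ cl(⋃_{n≥0}(A_i ∩ V_n)) for i = 1,2. Then 𝓡(A₁,A₂) = lim_{n→∞} 𝓡_n(A₁∩V_n, A₂∩V_n), where 𝓡_n denotes the resistance between sets associated with the trace (E|_{V_n}, F|_{V_n}). -/

import Mathlib

open Filter Set Metric
open scoped ENNReal Topology

/-- A resistance form `(E, F)` on a set `X` (Kigami):
`F` is a linear subspace of the real-valued functions on `X`, `E` is a nonnegative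
symmetric bilinear form on `F` such that (RF1) constants belong to `F` and
`E(u,u) = 0` iff `u` is constant, (RF2) the quotient of `F` by the constants is a
Hilbert space under `E` (stated as completeness of the `E`-seminorm on `F`),
(RF3) points of `X` are separated by `F`, (RF4) for `x ≠ y` the quantity
`R(x,y) = (inf {E(u,u) : u ∈ F, u x = 1, u y = 0})⁻¹` is finite (i.e. the infimum
is positive; an admissible `u` always exists), and (RF5) the Markov property holds
for the unit truncation. -/
structure ResistanceForm (X : Type*) where
  F : Set (X → ℝ)
  E : (X → ℝ) → (X → ℝ) → ℝ
  zero_mem : (0 : X → ℝ) ∈ F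
  add_mem : ∀ {u v : X → ℝ}, u ∈ F → v ∈ F → u + v ∈ F
  smul_mem : ∀ (c : ℝ) {u : X → ℝ}, u ∈ F → c • u ∈ F
  const_mem : ∀ c : ℝ, (fun _ => c) ∈ F
  symm : ∀ u ∈ F, ∀ v ∈ F, E u v = E v u
  add_left : ∀ u ∈ F, ∀ v ∈ F, ∀ w ∈ F, E (u + v) w = E u w + E v w
  smul_left : ∀ (c : ℝ), ∀ u ∈ F, ∀ v ∈ F, E (c • u) v = c * E u v
  nonneg : ∀ u ∈ F, 0 ≤ E u u
  null_iff_const : ∀ u ∈ F, (E u u = 0 ↔ ∃ c : ℝ, ∀ x, u x = c)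
  complete : ∀ u : ℕ → (X → ℝ), (∀ n, u n ∈ F) →
    (∀ ε : ℝ, 0 < ε → ∃ N : ℕ, ∀ m ≥ N, ∀ n ≥ N, E (u m - u n) (u m - u n) < ε) →
    ∃ v ∈ F, ∀ ε : ℝ, 0 < ε → ∃ N : ℕ, ∀ n ≥ N, E (v - u n) (v - u n) < ε
  sep : ∀ x y : X, x ≠ y → ∃ u ∈ F, u x ≠ u y
  exists_unit : ∀ x y : X, x ≠ y → ∃ u ∈ F, u x = 1 ∧ u y = 0
  inf_pos : ∀ x y : X, x ≠ y →
    0 < sInf {e : ℝ | ∃ u ∈ F, u x = 1 ∧ u y = 0 ∧ E u u = e}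
  markov : ∀ u ∈ F, (fun x => max 0 (min 1 (u x))) ∈ F ∧
    E (fun x => max 0 (min 1 (u x))) (fun x => max 0 (min 1 (u x))) ≤ E u u

namespace ResistanceForm

variable {X : Type*}

open Classical in
/-- The resistance metric `R` associated with a resistance form:
`R(x,x) = 0` and `R(x,y) = (inf {E(u,u) : u ∈ F, u x = 1, u y = 0})⁻¹` for `x ≠ y`. -/
noncomputable def rmetric (rf : ResistanceForm X) (x y : X) : ℝ :=
  if x = y then 0
  else (sInf {e : ℝ | ∃ u ∈ rf.F, u x = 1 ∧ u y = 0 ∧ rf.E u u = e})⁻¹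

open Classical in
/-- The resistance `𝓡(A,B)` between two sets: the reciprocal of the minimal energy of
functions that are `≡ 1` on `A` and `≡ 0` on `B` if such functions exist, `0` if no
such function exists, and `∞` if `A` or `B` is empty. -/
noncomputable def setRes (rf : ResistanceForm X) (A B : Set X) : ℝ≥0∞ :=
  if A.Nonempty ∧ B.Nonempty then
    (if ∃ u ∈ rf.F, (∀ x ∈ A, u x = 1) ∧ (∀ x ∈ B, u x = 0) then
      (ENNReal.ofReal
        (sInf {e : ℝ | ∃ u ∈ rf.F, (∀ x ∈ A, u x = 1) ∧ (∀ x ∈ B, u x = 0) ∧ rf.E u u = e}))⁻¹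
    else 0)
  else ⊤

end ResistanceForm

/-- A distance function `ρ` on `X` is doubling: there is `N ∈ ℕ` such that every ball of
radius `2r` is covered by `N` balls of radius `r`. -/
def DoublingOf {X : Type*} (ρ : X → X → ℝ) : Prop :=
  ∃ N : ℕ, ∀ (x : X) (r : ℝ), ∃ s : Finset X, s.card ≤ N ∧
    {y : X | ρ x y < 2 * r} ⊆ ⋃ z ∈ s, {y : X | ρ z y < r}

/-- A distance function `ρ` on `X` is uniformly perfect: there is `γ > 1` such that
`B(x, γ r) \ B(x, r) ≠ ∅` whenever `B(x,r)` is not the whole space. -/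
def UniformlyPerfectOf {X : Type*} (ρ : X → X → ℝ) : Prop :=
  ∃ γ : ℝ, 1 < γ ∧ ∀ (x : X) (r : ℝ), 0 < r → {y : X | ρ x y < r} ≠ Set.univ →
    ({y : X | ρ x y < γ * r} \ {y : X | ρ x y < r}).Nonempty


/-! Write `cap(A, B) = 𝓡(A, B)⁻¹ ∈ [0, ∞]` for the infimal energy of functions that are `1` on
`A` and `0` on `B`. Along the increasing pairs `(A₁ ∩ V_n, A₂ ∩ V_n)` the capacities increase and
stay below `cap(A₁, A₂)`. If their supremum `L` is finite, near-minimisers at the levels `n` form an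
energy-Cauchy sequence by the parallelogram law, because the midpoint of two of them is admissible
at the lower level; by completeness they converge in energy to some `v` with `E(v) ≤ L`. The
estimate `|u x - u y|² ≤ R(x, y) E(u)` makes the differences `u_n x - u_n y` converge to
`v x - v y`, so a constant shift of `v` is `1` on `⋃ A₁ ∩ V_n` and `0` on `⋃ A₂ ∩ V_n`, and, being
`R`-continuous, also on `A₁` and `A₂`. Hence `cap(A₁, A₂) ≤ L`. -/
namespace ResistanceForm

variable {X : Type*} (rf : ResistanceForm X) {u v : X → ℝ}

section Energy

lemma sub_mem (hu : u ∈ rf.F) (hv : v ∈ rf.F) : u - v ∈ rf.F := by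
  simpa [sub_eq_add_neg] using rf.add_mem hu (rf.smul_mem (-1) hv)

lemma E_add_right {w : X → ℝ} (hu : u ∈ rf.F) (hv : v ∈ rf.F) (hw : w ∈ rf.F) :
    rf.E u (v + w) = rf.E u v + rf.E u w := by
  rw [rf.symm u hu _ (rf.add_mem hv hw), rf.add_left v hv w hw u hu, rf.symm v hv u hu,
    rf.symm w hw u hu]

lemma E_smul_right (c : ℝ) (hu : u ∈ rf.F) (hv : v ∈ rf.F) :
    rf.E u (c • v) = c * rf.E u v := by
  rw [rf.symm u hu _ (rf.smul_mem c hv), rf.smul_left c v hv u hu, rf.symm v hv u hu]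

lemma E_add_self (hu : u ∈ rf.F) (hv : v ∈ rf.F) :
    rf.E (u + v) (u + v) = rf.E u u + 2 * rf.E u v + rf.E v v := by
  rw [rf.add_left u hu v hv _ (rf.add_mem hu hv), rf.E_add_right hu hu hv,
    rf.E_add_right hv hu hv, rf.symm v hv u hu]
  ring

lemma E_smul_self (c : ℝ) (hu : u ∈ rf.F) : rf.E (c • u) (c • u) = c ^ 2 * rf.E u u := by
  rw [rf.smul_left c u hu _ (rf.smul_mem c hu), rf.E_smul_right c hu hu]
  ring

lemma E_sub_self (hu : u ∈ rf.F) (hv : v ∈ rf.F) :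
    rf.E (u - v) (u - v) = rf.E u u - 2 * rf.E u v + rf.E v v := by
  have hneg : u - v = u + (-1 : ℝ) • v := by rw [neg_one_smul, sub_eq_add_neg]
  rw [hneg, rf.E_add_self hu (rf.smul_mem _ hv), rf.E_smul_right _ hu hv, rf.E_smul_self _ hv]
  ring

lemma E_sub_comm (hu : u ∈ rf.F) (hv : v ∈ rf.F) :
    rf.E (u - v) (u - v) = rf.E (v - u) (v - u) := by
  rw [rf.E_sub_self hu hv, rf.E_sub_self hv hu, rf.symm v hv u hu]
  ring

lemma E_mul_self_le (hu : u ∈ rf.F) (hv : v ∈ rf.F) :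
    rf.E u v * rf.E u v ≤ rf.E u u * rf.E v v := by
  have hquad : ∀ t : ℝ, 0 ≤ rf.E v v * (t * t) + 2 * rf.E u v * t + rf.E u u := fun t => by
    have := rf.nonneg _ (rf.add_mem hu (rf.smul_mem t hv))
    rw [rf.E_add_self hu (rf.smul_mem t hv), rf.E_smul_right t hu hv, rf.E_smul_self t hv] at this
    linarith
  have := discrim_le_zero hquad
  rw [discrim] at this
  linarith

lemma E_const (c : ℝ) : rf.E (fun _ => c) (fun _ => c) = 0 :=
  (rf.null_iff_const _ (rf.const_mem c)).2 ⟨c, fun _ => rfl⟩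

lemma E_const_right (hu : u ∈ rf.F) (c : ℝ) : rf.E u (fun _ => c) = 0 := by
  have := rf.E_mul_self_le hu (rf.const_mem c)
  rw [rf.E_const, mul_zero] at this
  exact mul_self_eq_zero.1 (le_antisymm this (mul_self_nonneg _))

lemma E_add_const (hu : u ∈ rf.F) (c : ℝ) :
    rf.E (u + fun _ => c) (u + fun _ => c) = rf.E u u := by
  rw [rf.E_add_self hu (rf.const_mem c), rf.E_const_right hu c, rf.E_const]
  ring

lemma sqrt_E_add_le (hu : u ∈ rf.F) (hv : v ∈ rf.F) :
    √(rf.E (u + v) (u + v)) ≤ √(rf.E u u) + √(rf.E v v) := by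
  have hu0 := rf.nonneg u hu
  have hv0 := rf.nonneg v hv
  have hcross : rf.E u v ≤ √(rf.E u u) * √(rf.E v v) := by
    rw [← Real.sqrt_mul hu0]
    exact Real.le_sqrt_of_sq_le (by nlinarith [rf.E_mul_self_le hu hv])
  refine Real.sqrt_le_iff.2 ⟨by positivity, ?_⟩
  rw [rf.E_add_self hu hv, add_sq, Real.sq_sqrt hu0, Real.sq_sqrt hv0]
  linarith

lemma abs_sqrt_E_sub_sqrt_E_le (hu : u ∈ rf.F) (hv : v ∈ rf.F) :
    |√(rf.E u u) - √(rf.E v v)| ≤ √(rf.E (u - v) (u - v)) := by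
  have hu' := rf.sqrt_E_add_le (rf.sub_mem hu hv) hv
  have hv' := rf.sqrt_E_add_le (rf.sub_mem hv hu) hu
  rw [sub_add_cancel] at hu' hv'
  rw [rf.E_sub_comm hv hu] at hv'
  rw [abs_sub_le_iff]
  constructor <;> linarith

lemma tendsto_E_of_tendsto_E_sub {u : ℕ → X → ℝ} (hv : v ∈ rf.F) (hu : ∀ n, u n ∈ rf.F)
    (hlim : Tendsto (fun n => rf.E (v - u n) (v - u n)) atTop (𝓝 0)) :
    Tendsto (fun n => rf.E (u n) (u n)) atTop (𝓝 (rf.E v v)) := by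
  have hsqrt : Tendsto (fun n => √(rf.E (u n) (u n))) atTop (𝓝 √(rf.E v v)) := by
    rw [tendsto_iff_dist_tendsto_zero]
    refine squeeze_zero (fun _ => dist_nonneg) (fun n => ?_) (by simpa using hlim.sqrt)
    rw [Real.dist_eq, rf.E_sub_comm hv (hu n)]
    exact rf.abs_sqrt_E_sub_sqrt_E_le (hu n) hv
  simpa [Real.sq_sqrt (rf.nonneg _ (hu _)), Real.sq_sqrt (rf.nonneg _ hv)] using hsqrt.pow 2

end Energy

section Oscillation

lemma sq_sub_le_rmetric_mul_E (hu : u ∈ rf.F) (x y : X) :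
    (u x - u y) ^ 2 ≤ rf.rmetric x y * rf.E u u := by
  rcases eq_or_ne x y with rfl | hxy
  · simp [rmetric]
  set m := sInf {e : ℝ | ∃ u ∈ rf.F, u x = 1 ∧ u y = 0 ∧ rf.E u u = e}
  have hm : 0 < m := rf.inf_pos x y hxy
  rw [rmetric, if_neg hxy, ← div_eq_inv_mul, le_div_iff₀' hm]
  set d := u x - u y
  rcases eq_or_ne d 0 with hd | hd
  · simpa [hd] using rf.nonneg u hu
  have hw : d⁻¹ • (u + fun _ => -u y) ∈ rf.F := rf.smul_mem _ (rf.add_mem hu (rf.const_mem _))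
  have hmw : m ≤ d⁻¹ ^ 2 * rf.E u u := by
    refine csInf_le ⟨0, ?_⟩ ⟨_, hw, ?_, by simp, ?_⟩
    · rintro e ⟨w, hw, -, -, rfl⟩
      exact rf.nonneg w hw
    · simp [d, ← sub_eq_add_neg, inv_mul_cancel₀ hd]
    · rw [rf.E_smul_self _ (rf.add_mem hu (rf.const_mem _)), rf.E_add_const hu]
  calc m * d ^ 2 ≤ d⁻¹ ^ 2 * rf.E u u * d ^ 2 := by gcongr
    _ = rf.E u u := by field_simp

lemma sub_apply_eq_of_tendsto {u : ℕ → X → ℝ} (hv : v ∈ rf.F) (hu : ∀ n, u n ∈ rf.F)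
    (hlim : Tendsto (fun n => rf.E (v - u n) (v - u n)) atTop (𝓝 0)) {x y : X} {c : ℝ}
    (hc : ∀ᶠ n in atTop, u n x - u n y = c) : v x - v y = c := by
  have hzero : Tendsto (fun n => (v - u n) x - (v - u n) y) atTop (𝓝 0) :=
    squeeze_zero_norm
      (fun n => Real.abs_le_sqrt (rf.sq_sub_le_rmetric_mul_E (rf.sub_mem hv (hu n)) x y))
      (by simpa using (hlim.const_mul (rf.rmetric x y)).sqrt)
  have hconst : Tendsto (fun n => (v - u n) x - (v - u n) y) atTop (𝓝 (v x - v y - c)) :=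
    tendsto_const_nhds.congr' (hc.mono fun n hn => by simp only [Pi.sub_apply]; linarith)
  linarith [tendsto_nhds_unique hconst hzero]

lemma continuous_of_mem [MetricSpace X] (hR : ∀ x y : X, dist x y = rf.rmetric x y)
    (hu : u ∈ rf.F) : Continuous u := by
  refine continuous_iff_continuousAt.2 fun x => tendsto_iff_dist_tendsto_zero.2 ?_
  have hbound : Tendsto (fun y => √(dist y x * rf.E u u)) (𝓝 x) (𝓝 0) := by
    simpa using (((continuous_id.dist (continuous_const (y := x))).mul
      (continuous_const (y := rf.E u u))).sqrt.tendsto x)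
  refine squeeze_zero (fun _ => dist_nonneg) (fun y => ?_) hbound
  rw [Real.dist_eq, hR]
  exact Real.abs_le_sqrt (rf.sq_sub_le_rmetric_mul_E hu y x)

end Oscillation

section Capacity

variable {A B A' B' : Set X}

structure Admissible (A B : Set X) (u : X → ℝ) : Prop where
  mem : u ∈ rf.F
  eq_one : ∀ x ∈ A, u x = 1
  eq_zero : ∀ x ∈ B, u x = 0

/-- The minimal energy `𝓡(A,B)⁻¹`, taken in `ℝ≥0∞` so that it is `⊤` when nothing is
admissible. -/
noncomputable def capacity (A B : Set X) : ℝ≥0∞ :=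
  ⨅ (u) (_ : rf.Admissible A B u), ENNReal.ofReal (rf.E u u)

variable {rf}

lemma Admissible.mono (h : rf.Admissible A' B' u) (hA : A ⊆ A') (hB : B ⊆ B') :
    rf.Admissible A B u :=
  ⟨h.mem, fun x hx => h.eq_one x (hA hx), fun x hx => h.eq_zero x (hB hx)⟩

lemma Admissible.closure [MetricSpace X] (hR : ∀ x y : X, dist x y = rf.rmetric x y)
    (h : rf.Admissible A B u) : rf.Admissible (closure A) (closure B) u where
  mem := h.mem
  eq_one := Set.EqOn.closure (g := fun _ => 1) h.eq_one (rf.continuous_of_mem hR h.mem)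
    continuous_const
  eq_zero := Set.EqOn.closure (g := fun _ => 0) h.eq_zero (rf.continuous_of_mem hR h.mem)
    continuous_const

lemma capacity_le (h : rf.Admissible A B u) : rf.capacity A B ≤ ENNReal.ofReal (rf.E u u) :=
  iInf₂_le u h

lemma capacity_mono (hA : A ⊆ A') (hB : B ⊆ B') : rf.capacity A B ≤ rf.capacity A' B' :=
  le_iInf₂ fun _ h => capacity_le (h.mono hA hB)

lemma exists_admissible_E_lt {c : ℝ} (h : rf.capacity A B < ENNReal.ofReal c) :
    ∃ u, rf.Admissible A B u ∧ rf.E u u < c := by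
  obtain ⟨u, hu, hlt⟩ := by simpa only [capacity, iInf_lt_iff] using h
  exact ⟨u, hu, (ENNReal.ofReal_lt_ofReal_iff_of_nonneg (rf.nonneg u hu.mem)).1 hlt⟩

variable (rf)

lemma capacity_eq_zero_of_not_nonempty (h : ¬(A.Nonempty ∧ B.Nonempty)) :
    rf.capacity A B = 0 := by
  have hconst (c : ℝ) (hc : rf.Admissible A B fun _ => c) : rf.capacity A B = 0 := by
    simpa [rf.E_const] using capacity_le hc
  rcases not_and_or.1 h with hA | hB
  · exact hconst 0 ⟨rf.const_mem 0, by simp_all [Set.not_nonempty_iff_eq_empty], fun _ _ => rfl⟩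
  · exact hconst 1 ⟨rf.const_mem 1, fun _ _ => rfl, by simp_all [Set.not_nonempty_iff_eq_empty]⟩

lemma setRes_eq_inv_capacity (A B : Set X) : rf.setRes A B = (rf.capacity A B)⁻¹ := by
  unfold setRes
  split_ifs with hne hadm
  · have hS : {e | ∃ u ∈ rf.F, (∀ x ∈ A, u x = 1) ∧ (∀ x ∈ B, u x = 0) ∧ rf.E u u = e} =
        (fun u => rf.E u u) '' {u | rf.Admissible A B u} := by
      ext e
      simp only [Set.mem_ofPred_eq, Set.mem_image]
      exact ⟨fun ⟨u, hu, h1, h0, he⟩ => ⟨u, ⟨hu, h1, h0⟩, he⟩,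
        fun ⟨u, ⟨hu, h1, h0⟩, he⟩ => ⟨u, hu, h1, h0, he⟩⟩
    obtain ⟨u, hu, h1, h0⟩ := hadm
    have hnonempty : {u | rf.Admissible A B u}.Nonempty := ⟨u, hu, h1, h0⟩
    have hbdd : BddBelow ((fun u => rf.E u u) '' {u | rf.Admissible A B u}) :=
      ⟨0, by rintro _ ⟨w, hw, rfl⟩; exact rf.nonneg w hw.mem⟩
    rw [hS, Monotone.map_csInf_of_continuousAt ENNReal.continuous_ofReal.continuousAt
      ENNReal.ofReal_mono (hnonempty.image _) hbdd, ← Set.image_comp, sInf_image]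
    rfl
  · have hnone (u) : ¬rf.Admissible A B u := fun hu => hadm ⟨u, hu.mem, hu.eq_one, hu.eq_zero⟩
    simp [capacity, hnone]
  · rw [rf.capacity_eq_zero_of_not_nonempty hne, ENNReal.inv_zero]

end Capacity

section MinimizingSequence

variable {A B : Set X}

lemma exists_tendsto_E_sub {u : ℕ → X → ℝ} {g : ℕ → ℝ} (hu : ∀ n, u n ∈ rf.F)
    (hg : Tendsto g atTop (𝓝 0)) (hug : ∀ n k, n ≤ k → rf.E (u n - u k) (u n - u k) ≤ g n) :
    ∃ v ∈ rf.F, Tendsto (fun n => rf.E (v - u n) (v - u n)) atTop (𝓝 0) := by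
  have hcauchy : ∀ ε : ℝ, 0 < ε → ∃ N : ℕ, ∀ m ≥ N, ∀ n ≥ N,
      rf.E (u m - u n) (u m - u n) < ε := by
    intro ε hε
    obtain ⟨N, hN⟩ := eventually_atTop.1 (hg.eventually (gt_mem_nhds hε))
    refine ⟨N, fun m hm n hn => ?_⟩
    rcases le_total m n with h | h
    · exact (hug m n h).trans_lt (hN m hm)
    · rw [rf.E_sub_comm (hu m) (hu n)]
      exact (hug n m h).trans_lt (hN n hn)
  obtain ⟨v, hv, hlim⟩ := rf.complete u hu hcauchy
  refine ⟨v, hv, Metric.tendsto_atTop.2 fun ε hε => ?_⟩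
  obtain ⟨N, hN⟩ := hlim ε hε
  refine ⟨N, fun n hn => ?_⟩
  rw [Real.dist_0_eq_abs, abs_of_nonneg (rf.nonneg _ (rf.sub_mem hv (hu n)))]
  exact hN n hn

variable {rf}

lemma E_sub_le_of_admissible (hu : rf.Admissible A B u) (hv : rf.Admissible A B v) :
    rf.E (u - v) (u - v) ≤ 2 * rf.E u u + 2 * rf.E v v - 4 * (rf.capacity A B).toReal := by
  have hmid : rf.Admissible A B ((2 : ℝ)⁻¹ • (u + v)) :=
    ⟨rf.smul_mem _ (rf.add_mem hu.mem hv.mem),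
      fun x hx => by norm_num [hu.eq_one x hx, hv.eq_one x hx],
      fun x hx => by simp [hu.eq_zero x hx, hv.eq_zero x hx]⟩
  have hcap := ENNReal.toReal_le_of_le_ofReal (rf.nonneg _ hmid.mem) (capacity_le hmid)
  rw [rf.E_smul_self _ (rf.add_mem hu.mem hv.mem), rf.E_add_self hu.mem hv.mem] at hcap
  rw [rf.E_sub_self hu.mem hv.mem]
  linarith

/-- The energy limit is only determined up to constants; pinning it at a point of `⋃ a n`
recovers the boundary values. -/
lemma admissible_iUnion_of_tendsto {a b : ℕ → Set X} (ha : Monotone a)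
    (hb : Monotone b) {u : ℕ → X → ℝ} (hu : ∀ n, rf.Admissible (a n) (b n) (u n))
    (hv : v ∈ rf.F) (hlim : Tendsto (fun n => rf.E (v - u n) (v - u n)) atTop (𝓝 0))
    {y₀ : X} (hy₀ : y₀ ∈ ⋃ n, a n) :
    rf.Admissible (⋃ n, a n) (⋃ n, b n) (v + fun _ => 1 - v y₀) := by
  obtain ⟨k₀, hk₀⟩ := mem_iUnion.1 hy₀
  have hdiff (x : X) (k : ℕ) (c : ℝ) (hc : ∀ n ≥ k, u n x = c) : v x - v y₀ = c - 1 := by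
    refine rf.sub_apply_eq_of_tendsto hv (fun n => (hu n).mem) hlim
      (eventually_atTop.2 ⟨max k k₀, fun n hn => ?_⟩)
    rw [hc n (le_of_max_le_left hn), (hu n).eq_one y₀ (ha (le_of_max_le_right hn) hk₀)]
  refine ⟨rf.add_mem hv (rf.const_mem _), fun x hx => ?_, fun x hx => ?_⟩
  · obtain ⟨k, hk⟩ := mem_iUnion.1 hx
    have := hdiff x k 1 fun n hn => (hu n).eq_one x (ha hn hk)
    simp only [Pi.add_apply]
    linarith
  · obtain ⟨k, hk⟩ := mem_iUnion.1 hx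
    have := hdiff x k 0 fun n hn => (hu n).eq_zero x (hb hn hk)
    simp only [Pi.add_apply]
    linarith

lemma capacity_le_iSup_capacity [MetricSpace X] (hR : ∀ x y : X, dist x y = rf.rmetric x y)
    {a b : ℕ → Set X} (ha : Monotone a) (hb : Monotone b) (hA : A.Nonempty)
    (hAa : A ⊆ closure (⋃ n, a n)) (hBb : B ⊆ closure (⋃ n, b n)) :
    rf.capacity A B ≤ ⨆ n, rf.capacity (a n) (b n) := by
  set L := ⨆ n, rf.capacity (a n) (b n)
  obtain hL | hL := eq_top_or_lt_top L
  · exact hL ▸ le_top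
  set ℓ := L.toReal
  have hLℓ : L = ENNReal.ofReal ℓ := (ENNReal.ofReal_toReal hL.ne).symm
  have hδ : Tendsto (fun n : ℕ => 1 / ((n : ℝ) + 1)) atTop (𝓝 0) :=
    tendsto_one_div_add_atTop_nhds_zero_nat
  have hmin (n : ℕ) : ∃ u, rf.Admissible (a n) (b n) u ∧ rf.E u u < ℓ + 1 / (n + 1) := by
    refine exists_admissible_E_lt ((le_iSup (fun n => rf.capacity (a n) (b n)) n).trans_lt ?_)
    change L < _
    rw [hLℓ, ENNReal.ofReal_lt_ofReal_iff (by positivity)]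
    linarith [Nat.one_div_pos_of_nat (α := ℝ) (n := n)]
  choose u hu hEu using hmin
  have hcap : Tendsto (fun n => (rf.capacity (a n) (b n)).toReal) atTop (𝓝 ℓ) :=
    (ENNReal.tendsto_toReal hL.ne).comp
      (tendsto_atTop_iSup fun m n h => capacity_mono (ha h) (hb h))
  set g : ℕ → ℝ := fun n => 4 * (ℓ + 1 / (n + 1) - (rf.capacity (a n) (b n)).toReal)
  have hg : Tendsto g atTop (𝓝 0) := by
    simpa [g] using (((tendsto_const_nhds (x := ℓ)).add hδ).sub hcap).const_mul 4
  have hcauchy (n k : ℕ) (hnk : n ≤ k) : rf.E (u n - u k) (u n - u k) ≤ g n := by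
    have := E_sub_le_of_admissible (hu n) ((hu k).mono (ha hnk) (hb hnk))
    have hk : 1 / ((k : ℝ) + 1) ≤ 1 / (n + 1) := by gcongr
    linarith [hEu n, hEu k]
  obtain ⟨v, hv, hlim⟩ := rf.exists_tendsto_E_sub (fun n => (hu n).mem) hg hcauchy
  obtain ⟨y₀, hy₀⟩ := closure_nonempty_iff.1 (hA.mono hAa)
  have hw := ((admissible_iUnion_of_tendsto ha hb hu hv hlim hy₀).closure hR).mono hAa hBb
  have hEv : rf.E v v ≤ ℓ :=
    le_of_tendsto_of_tendsto' (rf.tendsto_E_of_tendsto_E_sub hv (fun n => (hu n).mem) hlim)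
      (by simpa using (tendsto_const_nhds (x := ℓ)).add hδ) fun n => (hEu n).le
  calc rf.capacity A B ≤ ENNReal.ofReal (rf.E v v) := by
        simpa only [rf.E_add_const hv] using capacity_le hw
    _ ≤ L := hLℓ ▸ ENNReal.ofReal_le_ofReal hEv

lemma tendsto_capacity [MetricSpace X] (hR : ∀ x y : X, dist x y = rf.rmetric x y)
    {a b : ℕ → Set X} (ha : Monotone a) (hb : Monotone b) (haA : ∀ n, a n ⊆ A)
    (hbB : ∀ n, b n ⊆ B) (hA : A.Nonempty) (hAa : A ⊆ closure (⋃ n, a n))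
    (hBb : B ⊆ closure (⋃ n, b n)) :
    Tendsto (fun n => rf.capacity (a n) (b n)) atTop (𝓝 (rf.capacity A B)) := by
  convert tendsto_atTop_iSup fun m n h => capacity_mono (ha h) (hb h)
  exact le_antisymm (capacity_le_iSup_capacity hR ha hb hA hAa hBb)
    (iSup_le fun n => capacity_mono (haA n) (hbB n))

end MinimizingSequence

end ResistanceForm

/-- `𝓡_n`, the resistance between sets for the trace on `V_n`, is expressed as the resistance
between `A₁ ∩ V_n` and `A₂ ∩ V_n` in the ambient form: the trace energy is the minimal energy
over all extensions, so the two coincide. -/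
theorem setRes_eq_lim_trace_setRes_general {X : Type*} [MetricSpace X]
    (rf : ResistanceForm X) (hR : ∀ x y : X, dist x y = rf.rmetric x y)
    (A₁ A₂ : Set X) (h₁ : A₁.Nonempty)
    (V : ℕ → Finset X) (hmono : Monotone V)
    (hA₁ : A₁ ⊆ closure (⋃ n, (A₁ ∩ (V n : Set X))))
    (hA₂ : A₂ ⊆ closure (⋃ n, (A₂ ∩ (V n : Set X)))) :
    Tendsto (fun n => rf.setRes (A₁ ∩ (V n : Set X)) (A₂ ∩ (V n : Set X))) atTop
      (𝓝 (rf.setRes A₁ A₂)) := by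
  have hV : Monotone fun n => (V n : Set X) := fun m n h => Finset.coe_subset.2 (hmono h)
  simp_rw [rf.setRes_eq_inv_capacity]
  exact tendsto_inv_iff.2 <| rf.tendsto_capacity hR (monotone_const.inter hV)
    (monotone_const.inter hV) (fun _ => inter_subset_left) (fun _ => inter_subset_left) h₁ hA₁ hA₂

/-- Under the standing assumptions, if `A₁, A₂` are nonempty subsets and
`{V_n}` is a spread sequence of `(X,R)` (an increasing sequence of nonempty finite sets
with dense union) such that `A_i ⊆ cl (⋃_n (A_i ∩ V_n))` for `i = 1,2`, then
`𝓡(A₁,A₂) = lim_n 𝓡_n(A₁ ∩ V_n, A₂ ∩ V_n)`.  Here `𝓡_n`, the resistance between sets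
associated with the trace `(E|_{V_n}, F|_{V_n})`, is expressed as the resistance between
the sets `A₁ ∩ V_n` and `A₂ ∩ V_n` in the ambient form: since the trace energy is the
minimal energy over all extensions, the two quantities coincide by definition. -/
theorem setRes_eq_lim_trace_setRes {X : Type*} [MetricSpace X] [CompleteSpace X]
    (rf : ResistanceForm X) (hR : ∀ x y : X, dist x y = rf.rmetric x y)
    (hdb : DoublingOf fun x y : X => dist x y)
    (hup : UniformlyPerfectOf fun x y : X => dist x y)
    (A₁ A₂ : Set X) (h₁ : A₁.Nonempty) (h₂ : A₂.Nonempty)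
    (V : ℕ → Finset X) (hmono : Monotone V) (hne : ∀ n, (V n).Nonempty)
    (hdense : Dense (⋃ n, (V n : Set X)))
    (hA₁ : A₁ ⊆ closure (⋃ n, (A₁ ∩ (V n : Set X))))
    (hA₂ : A₂ ⊆ closure (⋃ n, (A₂ ∩ (V n : Set X)))) :
    Tendsto (fun n => rf.setRes (A₁ ∩ (V n : Set X)) (A₂ ∩ (V n : Set X))) atTop
      (𝓝 (rf.setRes A₁ A₂)) :=
  setRes_eq_lim_trace_setRes_general rf hR A₁ A₂ h₁ V hmono hA₁ hA₂
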